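/- Let p > 1, 0 < f, 0 < k < 1, and F with f^p ≤ F. Suppose A, B ≥ 0 satisfy B ≤ f, A ≤ F, B^p ≤ k^{p-1} A, and (f - B)^p ≤ (1-k)^{p-1}(F - A). Then A ≤ F - (f-B)^p/(1-k)^{p-1}, and consequently A · ω_p(B^p/(k^{p-1} A))^p ≤ (F - (f-B)^p/(1-k)^{p-1}) · ω_p( B^p / (k^{p-1}(F - (f-B)^p/(1-k)^{p-1})) )^p, where ω_p is the inverse of H_p(z) = -(p-1)z^p + p z^{p-1} and A > 0. -/

import Mathlib

open Set

lemma Hp_strictAntiOn (p : ℝ) (hp : 1 < p) :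
    StrictAntiOn (fun z : ℝ => -(p - 1) * z ^ p + p * z ^ (p - 1)) (Set.Ici 1) := by
  apply strictAntiOn_of_deriv_neg (convex_Ici 1)
  · have hc : ∀ q : ℝ, ContinuousOn (fun z : ℝ => z ^ q) (Set.Ici 1) := by
      intro q
      intro z hz
      have hz0 : z ≠ 0 := by intro h; simp [h] at hz; linarith
      exact (Real.continuousAt_rpow_const z q (Or.inl hz0)).continuousWithinAt
    exact ((hc p).const_smul (-(p-1))).add ((hc (p-1)).const_smul p)
  · intro z hz
    rw [interior_Ici] at hz
    have hz1 : (1:ℝ) < z := hz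
    have hz0 : (0:ℝ) < z := by linarith
    have d1 : HasDerivAt (fun z : ℝ => z ^ p) (p * z ^ (p - 1)) z :=
      Real.hasDerivAt_rpow_const (Or.inl hz0.ne')
    have d2 : HasDerivAt (fun z : ℝ => z ^ (p - 1)) ((p - 1) * z ^ (p - 1 - 1)) z :=
      Real.hasDerivAt_rpow_const (Or.inl hz0.ne')
    have d : HasDerivAt (fun z : ℝ => -(p - 1) * z ^ p + p * z ^ (p - 1))
        (-(p - 1) * (p * z ^ (p - 1)) + p * ((p - 1) * z ^ (p - 1 - 1))) z :=
      (d1.const_mul _).add (d2.const_mul _)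
    rw [d.deriv]
    have hlt : z ^ (p - 1 - 1) < z ^ (p - 1) :=
      Real.rpow_lt_rpow_left_iff hz1 |>.mpr (by linarith)
    nlinarith [mul_pos (mul_pos (lt_trans one_pos hp) (sub_pos.mpr hp))
      (sub_pos.mpr hlt)]

lemma omega_key (p : ℝ) (hp : 1 < p) (ω : ℝ → ℝ)
    (hω : ∀ x ∈ Set.Icc (0:ℝ) 1, ω x ∈ Set.Icc 1 (p / (p - 1)) ∧
      -(p - 1) * ω x ^ p + p * ω x ^ (p - 1) = x)
    {x y : ℝ} (hy0 : 0 < y) (hyx : y ≤ x) (hx1 : x ≤ 1) :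
    y * ω x ^ p ≤ x * ω y ^ p := by
  have hx0 : 0 < x := lt_of_lt_of_le hy0 hyx
  obtain ⟨hax, Hx⟩ := hω x ⟨hx0.le, hx1⟩
  obtain ⟨hay, Hy⟩ := hω y ⟨hy0.le, le_trans hyx hx1⟩
  set a := ω x with ha_def
  set b := ω y with hb_def
  have ha1 : (1:ℝ) ≤ a := hax.1
  have hb1 : (1:ℝ) ≤ b := hay.1
  have ha0 : (0:ℝ) < a := lt_of_lt_of_le one_pos ha1
  have hb0 : (0:ℝ) < b := lt_of_lt_of_le one_pos hb1
  -- a ≤ b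
  have hab : a ≤ b := by
    by_contra h
    push_neg at h
    have := Hp_strictAntiOn p hp (Set.mem_Ici.mpr hb1) (Set.mem_Ici.mpr ha1) h
    simp only at this
    rw [Hx, Hy] at this
    linarith
  have hap : a ^ p = a ^ (p - 1) * a := by
    rw [← Real.rpow_add_one ha0.ne', sub_add_cancel]
  have hbp : b ^ p = b ^ (p - 1) * b := by
    rw [← Real.rpow_add_one hb0.ne', sub_add_cancel]
  have hu : 0 < a ^ (p - 1) := Real.rpow_pos_of_pos ha0 _
  have hv : 0 < b ^ (p - 1) := Real.rpow_pos_of_pos hb0 _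
  rw [← Hx, ← Hy, hap, hbp]
  nlinarith [mul_pos hu hv, mul_le_mul_of_nonneg_left hab
    (le_of_lt (mul_pos (mul_pos (lt_trans one_pos hp) hu) hv))]

/-- The monotonicity step leading to Corollary 3.2: under conditions i)-iii) on `A, B`,
one has `A ≤ F - (f-B)^p/(1-k)^{p-1}`, and replacing `A` by this larger value
increases the quantity `A ω_p(B^p/(k^{p-1}A))^p`. -/
theorem A_omega_monotone (p : ℝ) (hp : 1 < p) (ω : ℝ → ℝ)
    (hω : ∀ x ∈ Set.Icc (0:ℝ) 1, ω x ∈ Set.Icc 1 (p / (p - 1)) ∧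
      -(p - 1) * ω x ^ p + p * ω x ^ (p - 1) = x)
    (f F k A B : ℝ) (hf : 0 < f) (hk : 0 < k) (hk1 : k < 1) (hfF : f ^ p ≤ F)
    (hA : 0 < A) (hB : 0 < B) (hBf : B ≤ f) (hAF : A ≤ F)
    (hhold1 : B ^ p ≤ k ^ (p - 1) * A)
    (hhold2 : (f - B) ^ p ≤ (1 - k) ^ (p - 1) * (F - A)) :
    A ≤ F - (f - B) ^ p / (1 - k) ^ (p - 1) ∧
    A * ω (B ^ p / (k ^ (p - 1) * A)) ^ p ≤
      (F - (f - B) ^ p / (1 - k) ^ (p - 1)) *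
        ω (B ^ p / (k ^ (p - 1) * (F - (f - B) ^ p / (1 - k) ^ (p - 1)))) ^ p := by
  have h1k : (0:ℝ) < (1 - k) ^ (p - 1) := Real.rpow_pos_of_pos (by linarith) _
  have hkp : (0:ℝ) < k ^ (p - 1) := Real.rpow_pos_of_pos hk _
  have hBp : (0:ℝ) < B ^ p := Real.rpow_pos_of_pos hB _
  have hdiv : (f - B) ^ p / (1 - k) ^ (p - 1) ≤ F - A :=
    (div_le_iff₀ h1k).mpr (by linarith [hhold2])
  have hAA' : A ≤ F - (f - B) ^ p / (1 - k) ^ (p - 1) := by linarith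
  refine ⟨hAA', ?_⟩
  set A' := F - (f - B) ^ p / (1 - k) ^ (p - 1) with hA'_def
  have hA'0 : 0 < A' := lt_of_lt_of_le hA hAA'
  set x := B ^ p / (k ^ (p - 1) * A) with hx_def
  set y := B ^ p / (k ^ (p - 1) * A') with hy_def
  have hx0 : 0 < x := div_pos hBp (mul_pos hkp hA)
  have hy0 : 0 < y := div_pos hBp (mul_pos hkp hA'0)
  have hyx : y ≤ x := by
    apply div_le_div_of_nonneg_left hBp.le (mul_pos hkp hA)
    exact mul_le_mul_of_nonneg_left hAA' hkp.le
  have hx1 : x ≤ 1 := (div_le_one (mul_pos hkp hA)).mpr hhold1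
  have key := omega_key p hp ω hω hy0 hyx hx1
  have hAx : A * x = B ^ p / k ^ (p - 1) := by
    rw [hx_def]; field_simp
  have hAy : A' * y = B ^ p / k ^ (p - 1) := by
    rw [hy_def]; field_simp
  have hωx : 0 ≤ ω x ^ p := (Real.rpow_pos_of_pos
    (lt_of_lt_of_le one_pos (hω x ⟨hx0.le, hx1⟩).1.1) p).le
  -- A * ωx^p = (A*x) * ωx^p / x, etc.
  have hC : 0 < B ^ p / k ^ (p - 1) := div_pos hBp hkp
  rw [← mul_le_mul_iff_of_pos_right (mul_pos hx0 hy0)]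
  calc A * ω x ^ p * (x * y) = (A * x) * (y * ω x ^ p) := by ring
    _ = (B ^ p / k ^ (p - 1)) * (y * ω x ^ p) := by rw [hAx]
    _ ≤ (B ^ p / k ^ (p - 1)) * (x * ω y ^ p) := mul_le_mul_of_nonneg_left key hC.le
    _ = (A' * y) * (x * ω y ^ p) := by rw [hAy]
    _ = A' * ω y ^ p * (x * y) := by ring
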